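/- Let f be entire with M := sup_{z∈ℂ} |f(z)| e^{−|z|²/2} < ∞. Then for every w ∈ ℂ, |f'(w)| ≤ (√(2π) + 2)(1 + |w|) e^{|w|²/2} M. -/
import Mathlib

lemma exp_three_half_le : Real.exp (3/2) ≤ Real.sqrt (2 * Real.pi) + 2 := by
  have hs : (2.5 : ℝ) ≤ Real.sqrt (2 * Real.pi) := by
    rw [show (2.5:ℝ) = Real.sqrt (2.5^2) by rw [Real.sqrt_sq]; norm_num]
    apply Real.sqrt_le_sqrt
    nlinarith [Real.pi_gt_d6]
  have he : Real.exp (3/2) ≤ 4.5 := by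
    have h3 : Real.exp 3 ≤ 4.5 ^ 2 := by
      have hd := Real.exp_one_lt_d9
      have hcube : Real.exp 1 ^ 3 ≤ (2.7182818286:ℝ) ^ 3 :=
        pow_le_pow_left₀ (Real.exp_pos 1).le hd.le 3
      calc Real.exp 3 = Real.exp 1 ^ 3 := by
            rw [← Real.exp_nat_mul]; norm_num
        _ ≤ (2.7182818286:ℝ) ^ 3 := hcube
        _ ≤ 4.5 ^ 2 := by norm_num
    have hsq : Real.exp (3/2) ^ 2 = Real.exp 3 := by
      rw [← Real.exp_nat_mul]; norm_num
    nlinarith [Real.exp_pos (3/2 : ℝ)]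
  linarith

theorem deriv_estimate_fock (f : ℂ → ℂ) (hf : Differentiable ℂ f) (M : ℝ)
    (hM : ∀ z : ℂ, ‖f z‖ * Real.exp (-‖z‖ ^ 2 / 2) ≤ M) (w : ℂ) :
    ‖deriv f w‖ ≤ (Real.sqrt (2 * Real.pi) + 2) * (1 + ‖w‖) * Real.exp (‖w‖ ^ 2 / 2) * M := by
  set r : ℝ := 1 / (1 + ‖w‖) with hr
  have hw0 : (0:ℝ) ≤ ‖w‖ := norm_nonneg w
  have h1w : (0:ℝ) < 1 + ‖w‖ := by linarith
  have hrpos : 0 < r := by positivity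
  have hM0 : 0 ≤ M := le_trans (by positivity) (hM 0)
  set C : ℝ := M * Real.exp ((‖w‖ + r) ^ 2 / 2) with hC
  have key : ‖deriv f w‖ ≤ C / r := by
    apply Complex.norm_deriv_le_of_forall_mem_sphere_norm_le hrpos
      (hf.diffContOnCl)
    intro z hz
    have hzn : ‖z‖ ≤ ‖w‖ + r := by
      have hd : ‖z - w‖ = r := by simpa [Metric.mem_sphere, dist_eq_norm] using hz
      calc ‖z‖ = ‖w + (z - w)‖ := by ring_nf
        _ ≤ ‖w‖ + ‖z - w‖ := norm_add_le _ _
        _ = ‖w‖ + r := by rw [hd]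
    have h1 : ‖f z‖ ≤ M * Real.exp (‖z‖ ^ 2 / 2) := by
      calc ‖f z‖ = ‖f z‖ * Real.exp (-‖z‖^2/2) * Real.exp (‖z‖^2/2) := by
            rw [mul_assoc, ← Real.exp_add, show -‖z‖^2/2 + ‖z‖^2/2 = 0 by ring, Real.exp_zero, mul_one]
        _ ≤ M * Real.exp (‖z‖^2/2) :=
            mul_le_mul_of_nonneg_right (hM z) (Real.exp_pos _).le
    calc ‖f z‖ ≤ M * Real.exp (‖z‖ ^ 2 / 2) := h1
      _ ≤ C := by
          apply mul_le_mul_of_nonneg_left _ hM0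
          apply Real.exp_le_exp.2
          have hz0 := norm_nonneg z
          nlinarith
  have hCr : C / r = (1 + ‖w‖) * (M * Real.exp ((‖w‖ + r) ^ 2 / 2)) := by
    rw [hC, hr]; field_simp
  have hexp : Real.exp ((‖w‖ + r) ^ 2 / 2) ≤ Real.exp (3/2) * Real.exp (‖w‖^2/2) := by
    rw [← Real.exp_add]
    apply Real.exp_le_exp.2
    have hwr : ‖w‖ * r ≤ 1 := by
      rw [hr, mul_one_div, div_le_one h1w]; linarith
    have hr1 : r ≤ 1 := by rw [hr, div_le_one h1w]; linarith
    nlinarith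
  have hE : (0:ℝ) ≤ Real.exp (‖w‖^2/2) := (Real.exp_pos _).le
  calc ‖deriv f w‖ ≤ C / r := key
    _ = (1 + ‖w‖) * (M * Real.exp ((‖w‖ + r) ^ 2 / 2)) := hCr
    _ ≤ (1 + ‖w‖) * (M * (Real.exp (3/2) * Real.exp (‖w‖^2/2))) := by
        apply mul_le_mul_of_nonneg_left _ h1w.le
        exact mul_le_mul_of_nonneg_left hexp hM0
    _ ≤ (1 + ‖w‖) * (M * ((Real.sqrt (2 * Real.pi) + 2) * Real.exp (‖w‖^2/2))) := by
        apply mul_le_mul_of_nonneg_left _ h1w.le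
        apply mul_le_mul_of_nonneg_left _ hM0
        exact mul_le_mul_of_nonneg_right exp_three_half_le hE
    _ = (Real.sqrt (2 * Real.pi) + 2) * (1 + ‖w‖) * Real.exp (‖w‖ ^ 2 / 2) * M := by ring
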